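/- arXiv:2512.19645 — 3 statements merged into one kernel-verified Lean document; each statement's English description precedes it below -/
import Mathlib

section
/- Let G be the presented group ⟨a₁, a₂, a₃, a₄, a₅, a₆ | a₁² = a₂² = a₃² = a₄² = a₅² = a₆³ = a₁a₂a₃a₄a₅a₆ = 1⟩. Then the subgroup of G generated by the four elements a₁a₂, a₁a₃, a₁a₄ and a₁a₅ is equal to the whole group G. -/
/-! With `x = a₁a₂a₃a₄a₅`, the subgroup `H` generated by the `a₁aᵢ` contains every product
`aᵢaⱼ = (a₁aᵢ)⁻¹(a₁aⱼ)` of two involutions, hence `x² = (a₁a₂)(a₃a₄)(a₅a₁)(a₂a₃)(a₄a₅)`.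
The relation `a₆ = x⁻¹` turns `a₆³ = 1` into `x³ = 1`, so `x = (x²)⁻¹ ∈ H`, and then
`a₁ = x((a₂a₃)(a₄a₅))⁻¹ ∈ H`; all other generators follow. -/

/-- The relators `a₁², a₂², a₃², a₄², a₅², a₆³, a₁a₂a₃a₄a₅a₆` of the presented
group `G = ⟨a₁,…,a₆ | a₁² = a₂² = a₃² = a₄² = a₅² = a₆³ = a₁a₂a₃a₄a₅a₆ = 1⟩`. -/
def exampleRels : Set (FreeGroup (Fin 6)) :=
  {FreeGroup.of 0 ^ 2, FreeGroup.of 1 ^ 2, FreeGroup.of 2 ^ 2, FreeGroup.of 3 ^ 2,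
    FreeGroup.of 4 ^ 2, FreeGroup.of 5 ^ 3,
    FreeGroup.of 0 * FreeGroup.of 1 * FreeGroup.of 2 * FreeGroup.of 3 *
      FreeGroup.of 4 * FreeGroup.of 5}

namespace Subgroup

variable {G : Type*} [Group G] {H : Subgroup G}

theorem mul_mem_of_mul_mem_of_sq_eq_one {a b c : G} (hb : b ^ 2 = 1)
    (hab : a * b ∈ H) (hac : a * c ∈ H) : b * c ∈ H := by
  have hb' : b⁻¹ = b := inv_eq_of_mul_eq_one_right (by rwa [← sq])
  have : (a * b)⁻¹ * (a * c) = b * c := by rw [mul_inv_rev, hb']; group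
  exact this ▸ mul_mem (inv_mem hab) hac

theorem mem_closure_of_pow_three_eq_one {s₀ s₁ s₂ s₃ s₄ : G}
    (h₀ : s₀ ^ 2 = 1) (h₁ : s₁ ^ 2 = 1) (h₂ : s₂ ^ 2 = 1) (h₃ : s₃ ^ 2 = 1) (h₄ : s₄ ^ 2 = 1)
    (h : (s₀ * s₁ * s₂ * s₃ * s₄) ^ 3 = 1) :
    s₀ ∈ closure {s₀ * s₁, s₀ * s₂, s₀ * s₃, s₀ * s₄} := by
  set H := closure {s₀ * s₁, s₀ * s₂, s₀ * s₃, s₀ * s₄}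
  have g₁ : s₀ * s₁ ∈ H := subset_closure (by simp)
  have g₂ : s₀ * s₂ ∈ H := subset_closure (by simp)
  have g₃ : s₀ * s₃ ∈ H := subset_closure (by simp)
  have g₄ : s₀ * s₄ ∈ H := subset_closure (by simp)
  have g₀ : s₀ * s₀ ∈ H := by rw [← sq, h₀]; exact one_mem H
  have p₁₂ := mul_mem_of_mul_mem_of_sq_eq_one h₁ g₁ g₂
  have p₂₃ := mul_mem_of_mul_mem_of_sq_eq_one h₂ g₂ g₃
  have p₃₄ := mul_mem_of_mul_mem_of_sq_eq_one h₃ g₃ g₄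
  have p₄₀ := mul_mem_of_mul_mem_of_sq_eq_one h₄ g₄ g₀
  set x := s₀ * s₁ * s₂ * s₃ * s₄
  have hx2 : x ^ 2 ∈ H := by
    have : x ^ 2 = s₀ * s₁ * (s₂ * s₃) * (s₄ * s₀) * (s₁ * s₂) * (s₃ * s₄) := by
      simp only [x, pow_two, mul_assoc]
    rw [this]
    exact mul_mem (mul_mem (mul_mem (mul_mem g₁ p₂₃) p₄₀) p₁₂) p₃₄
  have hx : x ∈ H := by
    have : x = (x ^ 2)⁻¹ := eq_inv_iff_mul_eq_one.2 (by rw [← pow_succ']; exact h)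
    exact this ▸ inv_mem hx2
  have : s₀ = x * (s₁ * s₂ * (s₃ * s₄))⁻¹ := by simp only [x]; group
  exact this ▸ mul_mem hx (inv_mem (mul_mem p₁₂ p₃₄))

end Subgroup

theorem PresentedGroup.of_pow_eq_one {α : Type*} {rels : Set (FreeGroup α)} {x : α} {n : ℕ}
    (h : FreeGroup.of x ^ n ∈ rels) : (PresentedGroup.of x : PresentedGroup rels) ^ n = 1 :=
  (map_pow (PresentedGroup.mk rels) _ n).symm.trans (PresentedGroup.one_of_mem h)

/-- In `G = ⟨a₁,…,a₆ | a₁² = a₂² = a₃² = a₄² = a₅² = a₆³ = a₁a₂a₃a₄a₅a₆ = 1⟩`,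
the subgroup generated by `a₁a₂`, `a₁a₃`, `a₁a₄`, `a₁a₅` is all of `G`. -/
theorem exampleSubgroup_eq_top :
    Subgroup.closure
      ({PresentedGroup.of 0 * PresentedGroup.of 1,
        PresentedGroup.of 0 * PresentedGroup.of 2,
        PresentedGroup.of 0 * PresentedGroup.of 3,
        PresentedGroup.of 0 * PresentedGroup.of 4} :
          Set (PresentedGroup exampleRels)) = ⊤ := by
  set a : Fin 6 → PresentedGroup exampleRels := PresentedGroup.of
  have ha₅ : a 5 = (a 0 * a 1 * a 2 * a 3 * a 4)⁻¹ := by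
    have := PresentedGroup.one_of_mem (rels := exampleRels) (x := FreeGroup.of 0 *
      FreeGroup.of 1 * FreeGroup.of 2 * FreeGroup.of 3 * FreeGroup.of 4 * FreeGroup.of 5)
      (by simp [exampleRels])
    simp only [map_mul] at this
    exact eq_inv_of_mul_eq_one_right this
  have hcube : (a 0 * a 1 * a 2 * a 3 * a 4) ^ 3 = 1 := by
    have : a 5 ^ 3 = 1 := PresentedGroup.of_pow_eq_one (by simp [exampleRels])
    rwa [ha₅, inv_pow, inv_eq_one] at this
  have h₀ := Subgroup.mem_closure_of_pow_three_eq_one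
    (PresentedGroup.of_pow_eq_one (by simp [exampleRels]))
    (PresentedGroup.of_pow_eq_one (by simp [exampleRels]))
    (PresentedGroup.of_pow_eq_one (by simp [exampleRels]))
    (PresentedGroup.of_pow_eq_one (by simp [exampleRels]))
    (PresentedGroup.of_pow_eq_one (by simp [exampleRels])) hcube
  set H := Subgroup.closure {a 0 * a 1, a 0 * a 2, a 0 * a 3, a 0 * a 4}
  have hgen (i : Fin 6) (hi : a 0 * a i ∈ H) : a i ∈ H := (H.mul_mem_cancel_left h₀).mp hi
  have h₁ := hgen 1 (Subgroup.subset_closure (by simp))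
  have h₂ := hgen 2 (Subgroup.subset_closure (by simp))
  have h₃ := hgen 3 (Subgroup.subset_closure (by simp))
  have h₄ := hgen 4 (Subgroup.subset_closure (by simp))
  have h₅ : a 5 ∈ H :=
    ha₅ ▸ H.inv_mem (H.mul_mem (H.mul_mem (H.mul_mem (H.mul_mem h₀ h₁) h₂) h₃) h₄)
  rw [eq_top_iff, ← PresentedGroup.closure_range_of, Subgroup.closure_le]
  rintro _ ⟨i, rfl⟩
  fin_cases i
  exacts [h₀, h₁, h₂, h₃, h₄, h₅]
end

section
/- Let m, n ≥ 2 be integers with m + n ≥ 5, and let T = ⟨g, h | gᵐ = hⁿ⟩ be the presented group on two generators g, h with the single relator gᵐh⁻ⁿ. Then the subgroup of T generated by gᵐ and gh is free abelian of rank 2, i.e. isomorphic to ℤ × ℤ. -/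
/-!
The element `z = gᵐ = hⁿ` is central, so `z` and `t = gh` span an abelian subgroup, and it
suffices to show that `zᵃ tᵇ = 1` forces `a = b = 0`. Killing `z` maps `T` onto the free
product `ℤ/m ∗ ℤ/n`, where `gh` becomes the alternating product of two nontrivial letters and
so has infinite order; hence `b = 0`. The map `g ↦ n, h ↦ m` onto `ℤ`
sends `z` to `mn ≠ 0`, hence `a = 0`.
-/

/-- The relator `gᵐh⁻ⁿ` of the one-relator group `T = ⟨g, h | gᵐ = hⁿ⟩`, where
`g = FreeGroup.of true` and `h = FreeGroup.of false`. -/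
def torusKnotRel (m n : ℕ) : FreeGroup Bool :=
  FreeGroup.of true ^ m * (FreeGroup.of false ^ n)⁻¹

open Subgroup in
theorem Commute.nonempty_closure_pair_mulEquiv {G H : Type*} [Group G] [Group H] {z t : G}
    (hzt : Commute z t) (hz : ¬IsOfFinOrder z) (f : G →* H) (hfz : f z = 1)
    (hft : ¬IsOfFinOrder (f t)) :
    Nonempty (closure {z, t} ≃* Multiplicative (ℤ × ℤ)) := by
  have hcomm : ∀ a b : Multiplicative ℤ, Commute (zpowersHom G z a) (zpowersHom G t b) :=
    fun a b => hzt.zpow_zpow a.toAdd b.toAdd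
  have hdisj : Disjoint (zpowers z) (zpowers t) := by
    rw [disjoint_iff_inf_le]
    rintro _ ⟨⟨a, rfl⟩, b, hb : t ^ b = z ^ a⟩
    have hb0 : b = 0 := injective_zpow_iff_not_isOfFinOrder.2 hft <| by
      simpa [hfz] using congrArg f hb
    show z ^ a = 1
    rw [← hb, hb0, zpow_zero]
  let φ := (zpowersHom G z).noncommCoprod (zpowersHom G t) hcomm
  have hinj : Function.Injective φ :=
    (MonoidHom.noncommCoprod_injective _ _ _).2
      ⟨injective_zpow_iff_not_isOfFinOrder.2 hz,
        injective_zpow_iff_not_isOfFinOrder.2 (fun ht => hft (f.isOfFinOrder ht)), hdisj⟩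
  have hrange : φ.range = closure {z, t} := by
    rw [MonoidHom.noncommCoprod_range, range_zpowersHom, range_zpowersHom, zpowers_eq_closure,
      zpowers_eq_closure, ← Subgroup.closure_union, Set.singleton_union]
  exact ⟨((MonoidHom.ofInjective hinj).trans (MulEquiv.subgroupCongr hrange)).symm.trans
    (MulEquiv.prodMultiplicative ℤ ℤ).symm⟩

namespace Monoid.CoprodI

variable {ι : Type*} {M : ι → Type*} [∀ i, Monoid (M i)]

theorem NeWord.prod_ne_one [DecidableEq ι] [∀ i, DecidableEq (M i)] {i j : ι}
    (w : NeWord M i j) : w.prod ≠ 1 := by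
  intro h
  have hw : w.toWord = Word.empty := Word.equiv.symm.injective (h.trans Word.prod_empty.symm)
  exact w.toList_ne_nil (congrArg Word.toList hw)

/-- The reduced word `a b a b ⋯ a b` with `k + 1` copies of `a b`. -/
def NeWord.alternating {i j : ι} (hij : i ≠ j) {a : M i} {b : M j} (ha : a ≠ 1) (hb : b ≠ 1) :
    ℕ → NeWord M i j
  | 0 => append (singleton a ha) hij (singleton b hb)
  | k + 1 =>
    append (singleton a ha) hij (append (singleton b hb) hij.symm (alternating hij ha hb k))

theorem NeWord.prod_alternating {i j : ι} (hij : i ≠ j) {a : M i} {b : M j} (ha : a ≠ 1)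
    (hb : b ≠ 1) (k : ℕ) : (alternating hij ha hb k).prod = (of a * of b) ^ (k + 1) := by
  induction k with
  | zero => simp [alternating]
  | succ k ih =>
    simp only [alternating, append_prod, prod_singleton, ih, pow_succ' _ (k + 1), mul_assoc]

theorem not_isOfFinOrder_of_mul_of [DecidableEq ι] [∀ i, DecidableEq (M i)] {i j : ι}
    (hij : i ≠ j) {a : M i} {b : M j} (ha : a ≠ 1) (hb : b ≠ 1) :
    ¬IsOfFinOrder (of a * of b) := by
  rw [isOfFinOrder_iff_pow_eq_one]
  rintro ⟨k, hk, hk1⟩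
  obtain ⟨k, rfl⟩ := Nat.exists_eq_add_one_of_ne_zero hk.ne'
  exact (NeWord.alternating hij ha hb k).prod_ne_one (by rw [NeWord.prod_alternating, hk1])

end Monoid.CoprodI

abbrev TorusKnotGroup (m n : ℕ) : Type :=
  PresentedGroup ({torusKnotRel m n} : Set (FreeGroup Bool))

namespace TorusKnotGroup

open PresentedGroup

variable {m n : ℕ}

def lift {G : Type*} [Group G] {x y : G} (hxy : x ^ m = y ^ n) : TorusKnotGroup m n →* G :=
  toGroup (f := fun b => cond b x y) <| by
    rintro r rfl
    simp [torusKnotRel, hxy]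

@[simp]
theorem lift_of_true {G : Type*} [Group G] {x y : G} (hxy : x ^ m = y ^ n) :
    lift hxy (of true) = x :=
  toGroup.of _

@[simp]
theorem lift_of_false {G : Type*} [Group G] {x y : G} (hxy : x ^ m = y ^ n) :
    lift hxy (of false) = y :=
  toGroup.of _

theorem of_true_pow_eq_of_false_pow : (of true : TorusKnotGroup m n) ^ m = of false ^ n := by
  have hrel := one_of_mem (Set.mem_singleton (torusKnotRel m n))
  rwa [torusKnotRel, map_mul, map_inv, map_pow, map_pow, mul_inv_eq_one] at hrel

theorem commute_of_true_pow_of_true_mul_of_false :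
    Commute ((of true : TorusKnotGroup m n) ^ m) (of true * of false) :=
  .mul_right ((Commute.refl _).pow_left m)
    (by rw [of_true_pow_eq_of_false_pow]; exact (Commute.refl _).pow_left n)

theorem not_isOfFinOrder_of_true_pow (hm : m ≠ 0) (hn : n ≠ 0) :
    ¬IsOfFinOrder ((of true : TorusKnotGroup m n) ^ m) := by
  have hxy : Multiplicative.ofAdd (n : ℤ) ^ m = Multiplicative.ofAdd (m : ℤ) ^ n := by
    rw [← ofAdd_nsmul, ← ofAdd_nsmul, nsmul_eq_mul, nsmul_eq_mul, mul_comm]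
  intro hfin
  have h1 := ((lift hxy).isOfFinOrder hfin).eq_one'
  rw [map_pow, lift_of_true, ← ofAdd_nsmul, ofAdd_eq_one, nsmul_eq_mul] at h1
  exact mul_ne_zero (Int.natCast_ne_zero.2 hm) (Int.natCast_ne_zero.2 hn) h1

abbrev CyclicFactor (m n : ℕ) (b : Bool) : Type := Multiplicative (ZMod (cond b m n))

theorem of_ofAdd_one_pow_cond (b : Bool) :
    Monoid.CoprodI.of (M := CyclicFactor m n) (i := b) (.ofAdd 1) ^ cond b m n = 1 := by
  rw [← MonoidHom.map_pow, ← ofAdd_nsmul, nsmul_one, ZMod.natCast_self, ofAdd_zero, map_one]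

def toCoprodZMod : TorusKnotGroup m n →* Monoid.CoprodI (CyclicFactor m n) :=
  lift ((of_ofAdd_one_pow_cond true).trans (of_ofAdd_one_pow_cond false).symm)

theorem toCoprodZMod_of_true_pow : toCoprodZMod (of true ^ m : TorusKnotGroup m n) = 1 := by
  rw [toCoprodZMod, map_pow, lift_of_true]
  exact of_ofAdd_one_pow_cond true

theorem not_isOfFinOrder_toCoprodZMod_of_true_mul_of_false (hm : m ≠ 1) (hn : n ≠ 1) :
    ¬IsOfFinOrder (toCoprodZMod (of true * of false : TorusKnotGroup m n)) := by
  rw [toCoprodZMod, map_mul, lift_of_true, lift_of_false]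
  have := ZMod.nontrivial_iff.2 hm
  have := ZMod.nontrivial_iff.2 hn
  exact Monoid.CoprodI.not_isOfFinOrder_of_mul_of (by decide) (by simp) (by simp)

end TorusKnotGroup

theorem subgroup_freeAbelian_of_torusKnotGroup_general
    (m n : ℕ) (hm : 2 ≤ m) (hn : 2 ≤ n) :
    Nonempty
      (↥(Subgroup.closure
          ({PresentedGroup.of true ^ m, PresentedGroup.of true * PresentedGroup.of false} :
            Set (PresentedGroup ({torusKnotRel m n} : Set (FreeGroup Bool))))) ≃*
        Multiplicative (ℤ × ℤ)) :=
  TorusKnotGroup.commute_of_true_pow_of_true_mul_of_false.nonempty_closure_pair_mulEquiv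
    (TorusKnotGroup.not_isOfFinOrder_of_true_pow (by omega) (by omega))
    TorusKnotGroup.toCoprodZMod TorusKnotGroup.toCoprodZMod_of_true_pow
    (TorusKnotGroup.not_isOfFinOrder_toCoprodZMod_of_true_mul_of_false (by omega) (by omega))

/-- Let `m, n ≥ 2` with `m + n ≥ 5` and let `T = ⟨g, h | gᵐ = hⁿ⟩`.  Then the
subgroup of `T` generated by `gᵐ` and `gh` is free abelian of rank `2`, i.e.
isomorphic to `ℤ × ℤ`. -/
theorem subgroup_freeAbelian_of_torusKnotGroup
    (m n : ℕ) (hm : 2 ≤ m) (hn : 2 ≤ n) (hmn : 5 ≤ m + n) :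
    Nonempty
      (↥(Subgroup.closure
          ({PresentedGroup.of true ^ m, PresentedGroup.of true * PresentedGroup.of false} :
            Set (PresentedGroup ({torusKnotRel m n} : Set (FreeGroup Bool))))) ≃*
        Multiplicative (ℤ × ℤ)) :=
  subgroup_freeAbelian_of_torusKnotGroup_general m n hm hn
end

section
/- Let H be a free group, let u ∈ H be a nontrivial element which is not a proper power in H, and let k be a nonzero integer. Let G = ⟨H, t | tut⁻¹ = uᵏ⟩ be the HNN extension of H associated to the isomorphism ⟨u⟩ ≅ ⟨uᵏ⟩ sending u to uᵏ. Then the subgroup of G generated by (the image of) u and the stable letter t is isomorphic to the Baumslag–Solitar group B(1,k) = ⟨a, t | tat⁻¹ = aᵏ⟩. -/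
/-- An element of a group is a proper power if it equals `y ^ k` for some
element `y` and some integer `k ≥ 2`. -/
def IsProperPower {G : Type*} [Group G] (x : G) : Prop :=
  ∃ (y : G) (k : ℕ), 2 ≤ k ∧ y ^ k = x

/-- The Baumslag–Solitar group `B(1,k) = ⟨a, t | t a t⁻¹ a⁻ᵏ⟩`, with
`a = FreeGroup.of true` and `t = FreeGroup.of false`. -/
abbrev BaumslagSolitar (k : ℤ) :=
  PresentedGroup ({FreeGroup.of false * FreeGroup.of true * (FreeGroup.of false)⁻¹ *
    (FreeGroup.of true ^ k)⁻¹} : Set (FreeGroup Bool))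

open Multiplicative Subgroup HNNExtension


lemma freeGroup_subsingleton {ι : Type*} [IsEmpty ι] : Subsingleton (FreeGroup ι) := by
  constructor
  intro x y
  have hx : ∀ z : FreeGroup ι, z.toWord = [] := by
    intro z
    cases hzw : z.toWord with
    | nil => rfl
    | cons a l => exact (IsEmpty.false a.1).elim
  exact FreeGroup.toWord_injective ((hx x).trans (hx y).symm)

lemma eq_one_of_isOfFinOrder_of_isFreeGroup {K : Type*} [Group K] [IsFreeGroup K]
    {x : K} (h : IsOfFinOrder x) : x = 1 := by
  by_contra hx
  haveI hfin : Finite (zpowers x) := h.finite_zpowers.to_subtype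
  rcases isEmpty_or_nonempty (IsFreeGroup.Generators (zpowers x)) with he | ⟨⟨i⟩⟩
  · haveI : Subsingleton (FreeGroup (IsFreeGroup.Generators (zpowers x))) := freeGroup_subsingleton
    haveI : Subsingleton (zpowers x) :=
      (IsFreeGroup.toFreeGroup (zpowers x)).toEquiv.subsingleton
    have : (⟨x, mem_zpowers x⟩ : zpowers x) = 1 := Subsingleton.elim _ _
    exact hx (by simpa using congrArg Subtype.val this)
  · set g : zpowers x := IsFreeGroup.of i with hg
    obtain ⟨n, hn, hgn⟩ := isOfFinOrder_iff_pow_eq_one.mp (isOfFinOrder_of_finite g)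
    let χ : (zpowers x) →* Multiplicative ℤ :=
      IsFreeGroup.lift (fun _ => ofAdd (1 : ℤ))
    have h1 : χ g = ofAdd (1 : ℤ) := IsFreeGroup.lift_of _ _
    have h2 : χ (g ^ n) = ofAdd (n : ℤ) := by
      rw [map_pow, h1, ← ofAdd_nsmul]
      simp
    rw [hgn, map_one] at h2
    have : (n : ℤ) = 0 := by
      have := congrArg toAdd h2
      simpa using this.symm
    omega


namespace BSHNN


abbrev Z : Type := Multiplicative ℤ
abbrev a0 : Z := ofAdd 1
abbrev B' (k : ℤ) : Subgroup Z := zpowers (ofAdd k)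
def f0 (k : ℤ) : Z →* (B' k) :=
  (zpowersHom Z (ofAdd k)).codRestrict (B' k) (fun x => zpow_mem (mem_zpowers _) _)
lemma f0_apply (k : ℤ) (x : Z) : (f0 k x : Z) = (ofAdd k) ^ (toAdd x) := rfl
lemma f0_bijective {k : ℤ} (hk : k ≠ 0) : Function.Bijective (f0 k) := by
  constructor
  · intro x y hxy
    have h := congrArg toAdd (Subtype.ext_iff.mp hxy)
    simp only [f0_apply, toAdd_zpow, toAdd_ofAdd, smul_eq_mul] at h
    exact toAdd.injective (mul_right_cancel₀ hk h)
  · rintro ⟨b, hb⟩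
    obtain ⟨n, rfl⟩ := hb
    exact ⟨ofAdd n, Subtype.ext (by simp [f0_apply])⟩
noncomputable def phi' (k : ℤ) (hk : k ≠ 0) : (⊤ : Subgroup Z) ≃* B' k :=
  Subgroup.topEquiv.trans (MulEquiv.ofBijective (f0 k) (f0_bijective hk))
lemma phi'_apply (k : ℤ) (hk : k ≠ 0) (x : Z) (h : x ∈ (⊤ : Subgroup Z)) :
    ((phi' k hk ⟨x, h⟩ : B' k) : Z) = (ofAdd k) ^ (toAdd x) := rfl


section Theta


variable {H : Type} [Group H] (u : H) (k : ℤ)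
variable (φ : (zpowers u) ≃* (zpowers (u ^ k)))

/-- the powers-of-`u` homomorphism -/
def m : Z →* H := zpowersHom H u

lemma m_apply (x : Z) : m u x = u ^ (toAdd x) := rfl

variable (hk : k ≠ 0)
variable (hconj : ∀ n : ℤ,
  (t : HNNExtension H (zpowers u) (zpowers (u ^ k)) φ) * of (u ^ n) = of (u ^ (n * k)) * t)

/-- the homomorphism from the HNN extension of `ℤ` to the big HNN extension -/
noncomputable def theta :
    HNNExtension Z ⊤ (B' k) (phi' k hk) →* HNNExtension H (zpowers u) (zpowers (u ^ k)) φ :=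
  HNNExtension.lift (of.comp (m u)) t (by
    rintro ⟨a, ha⟩
    show t * of (m u a) = of (m u ((phi' k hk ⟨a, ha⟩ : B' k) : Z)) * t
    rw [phi'_apply, m_apply, m_apply, toAdd_zpow]
    simpa using hconj (toAdd a))

lemma theta_of (g : Z) : theta u k φ hk hconj (of g) = of (u ^ (toAdd g)) :=
  HNNExtension.lift_of _ _ _ _

lemma theta_t : theta u k φ hk hconj t = t :=
  HNNExtension.lift_t _ _ _

lemma theta_injective (huinj : Function.Injective fun n : ℤ => u ^ n) :
    Function.Injective (theta u k φ hk hconj) := by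
  rw [injective_iff_map_eq_one]
  intro x hx
  obtain ⟨d⟩ := NormalWord.TransversalPair.nonempty Z ⊤ (B' k)
  set w : NormalWord d := NormalWord.equiv (phi' k hk) d x with hwdef
  have hw : w.prod (phi' k hk) = x := (NormalWord.equiv (phi' k hk) d).symm_apply_apply x
  -- the image reduced word over `H`
  let wH : HNNExtension.NormalWord.ReducedWord H (zpowers u) (zpowers (u ^ k)) :=
    { head := m u w.head
      toList := w.toList.map (Prod.map id (m u))
      chain := by
        rw [List.isChain_map]
        refine w.chain.imp ?_
        rintro ⟨a1, a2⟩ b hab hmem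
        apply hab
        dsimp only [Prod.map, id] at hmem ⊢
        rcases Int.units_eq_one_or a1 with h | h <;> subst h
        · rw [toSubgroup_one]; exact mem_top _
        · rw [toSubgroup_neg_one] at hmem ⊢
          obtain ⟨n, hn⟩ := hmem
          refine ⟨n, toAdd.injective ?_⟩
          have hkn : u ^ (k * n) = u ^ (toAdd a2) := by
            rw [zpow_mul]; exact hn
          have := huinj hkn
          simp only [toAdd_zpow, toAdd_ofAdd, smul_eq_mul]
          rw [mul_comm]
          exact this }
  have hprod : theta u k φ hk hconj (w.prod (phi' k hk)) = wH.prod φ := by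
    show theta u k φ hk hconj (NormalWord.ReducedWord.prod _ _) = NormalWord.ReducedWord.prod _ _
    rw [NormalWord.ReducedWord.prod, NormalWord.ReducedWord.prod, map_mul, map_list_prod,
      List.map_map, List.map_map, theta_of]
    congr 1
    refine congrArg List.prod (List.map_congr_left ?_)
    intro x _
    show theta u k φ hk hconj (t ^ (x.1 : ℤ) * of x.2) = t ^ (x.1 : ℤ) * of (m u x.2)
    rw [map_mul, map_zpow, theta_t, theta_of]
    rfl
  have h1 : wH.prod φ = 1 := by rw [← hprod, hw, hx]
  have h2 : wH.toList = [] :=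
    ReducedWord.toList_eq_nil_of_mem_of_range φ wH (by rw [h1]; exact one_mem _)
  have h3 : w.toList = [] := List.map_eq_nil_iff.mp h2
  have h4 : x = of w.head := by
    rw [← hw]
    show NormalWord.ReducedWord.prod _ _ = _
    rw [NormalWord.ReducedWord.prod, h3]
    simp
  have h5 : of (u ^ (toAdd w.head)) =
      (1 : HNNExtension H (zpowers u) (zpowers (u ^ k)) φ) := by
    rw [← theta_of u k φ hk hconj, ← h4, hx]
  have h6 : u ^ (toAdd w.head) = 1 := by
    apply HNNExtension.of_injective
    rw [h5, map_one]
  have h7 : toAdd w.head = 0 := huinj (by simpa using h6)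
  rw [h4]
  have : w.head = 1 := toAdd.injective (by simpa using h7)
  rw [this, map_one]

lemma theta_range :
    (theta u k φ hk hconj).range = closure {of u, t} := by
  apply le_antisymm
  · rintro _ ⟨x, rfl⟩
    induction x using HNNExtension.induction_on with
    | of g =>
        rw [theta_of, map_zpow]
        exact zpow_mem (subset_closure (Set.mem_insert _ _)) _
    | t =>
        rw [theta_t]
        exact subset_closure (Set.mem_insert_of_mem _ rfl)
    | mul x y hx hy => rw [map_mul]; exact mul_mem hx hy
    | inv x hx => rw [map_inv]; exact inv_mem hx
  · rw [closure_le]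
    intro x hx
    simp only [Set.mem_insert_iff, Set.mem_singleton_iff] at hx
    rcases hx with rfl | rfl
    · refine ⟨of a0, ?_⟩
      rw [theta_of]
      simp
    · exact ⟨t, theta_t u k φ hk hconj⟩


end Theta

variable (k : ℤ)

def A1 : BaumslagSolitar k := PresentedGroup.of true
def T1 : BaumslagSolitar k := PresentedGroup.of false

lemma bs_rel : T1 k * A1 k * (T1 k)⁻¹ = (A1 k) ^ k := by
  have h : (QuotientGroup.mk (FreeGroup.of false * FreeGroup.of true * (FreeGroup.of false)⁻¹ *
      (FreeGroup.of true ^ k)⁻¹ : FreeGroup Bool) : BaumslagSolitar k) = 1 := by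
    rw [QuotientGroup.eq_one_iff]
    exact Subgroup.subset_normalClosure (Set.mem_singleton _)
  have h2 : T1 k * A1 k * (T1 k)⁻¹ * ((A1 k) ^ k)⁻¹ = 1 := by
    exact h
  exact mul_inv_eq_one.mp h2

lemma bs_conj (n : ℤ) : T1 k * (A1 k) ^ n * (T1 k)⁻¹ = (A1 k) ^ (n * k) := by
  have h1 : T1 k * (A1 k) ^ n * (T1 k)⁻¹ = (T1 k * A1 k * (T1 k)⁻¹) ^ n := by
    have := map_zpow (MulAut.conj (T1 k)) (A1 k) n
    simpa [MulAut.conj_apply, mul_assoc] using this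
  rw [h1, bs_rel, ← zpow_mul, mul_comm]

variable (hk : k ≠ 0)

noncomputable def beta : HNNExtension Z ⊤ (B' k) (phi' k hk) →* BaumslagSolitar k :=
  HNNExtension.lift (zpowersHom _ (A1 k)) (T1 k) (by
    rintro ⟨a, ha⟩
    show T1 k * (A1 k) ^ (toAdd a) =
      (A1 k) ^ (toAdd ((phi' k hk ⟨a, ha⟩ : B' k) : Z)) * T1 k
    rw [phi'_apply, toAdd_zpow, toAdd_ofAdd, smul_eq_mul]
    rw [← bs_conj k (toAdd a)]
    group)

lemma beta_of (g : Z) : beta k hk (of g) = (A1 k) ^ (toAdd g) :=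
  HNNExtension.lift_of _ _ _ _

lemma beta_t : beta k hk t = T1 k :=
  HNNExtension.lift_t _ _ _

lemma alpha_cond : ∀ r ∈ ({FreeGroup.of false * FreeGroup.of true * (FreeGroup.of false)⁻¹ *
    (FreeGroup.of true ^ k)⁻¹} : Set (FreeGroup Bool)),
    FreeGroup.lift (fun b => cond b (of a0 : HNNExtension Z ⊤ (B' k) (phi' k hk)) t) r
      = 1 := by
  intro r hr
  rw [Set.mem_singleton_iff] at hr
  subst hr
  simp only [map_mul, map_inv, map_zpow, FreeGroup.lift_apply_of, Bool.cond_true, Bool.cond_false]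
  rw [mul_inv_eq_one, ← map_zpow]
  have h := equiv_eq_conj (φ := phi' k hk) ⟨a0, mem_top _⟩
  rw [← h]
  congr 1
  rw [phi'_apply]
  apply toAdd.injective
  simp

noncomputable def alpha : BaumslagSolitar k →* HNNExtension Z ⊤ (B' k) (phi' k hk) :=
  PresentedGroup.toGroup (alpha_cond k hk)

lemma alpha_A1 : alpha k hk (A1 k) = of a0 := PresentedGroup.toGroup.of _
lemma alpha_T1 : alpha k hk (T1 k) = t := PresentedGroup.toGroup.of _

lemma comp1 : (alpha k hk).comp (beta k hk) = MonoidHom.id _ := by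
  apply HNNExtension.hom_ext
  · apply MonoidHom.ext_mint
    show alpha k hk (beta k hk (of (ofAdd 1))) = of (ofAdd 1)
    rw [beta_of]
    simp only [toAdd_ofAdd, zpow_one, alpha_A1]
  · show alpha k hk (beta k hk t) = t
    rw [beta_t, alpha_T1]

lemma comp2 : (beta k hk).comp (alpha k hk) = MonoidHom.id _ := by
  apply PresentedGroup.ext
  intro b
  cases b
  · show beta k hk (alpha k hk (T1 k)) = T1 k
    rw [alpha_T1, beta_t]
  · show beta k hk (alpha k hk (A1 k)) = A1 k
    rw [alpha_A1, beta_of]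
    simp

noncomputable def iso1 : HNNExtension Z ⊤ (B' k) (phi' k hk) ≃* BaumslagSolitar k :=
  MonoidHom.toMulEquiv (beta k hk) (alpha k hk) (comp1 k hk) (comp2 k hk)


end BSHNN

open BSHNN in
/-- Let `H` be a free group, `u ∈ H` nontrivial and not a proper power, and let
`k` be a nonzero integer.  In the HNN extension `G = ⟨H, t | tut⁻¹ = uᵏ⟩` of `H`
along the isomorphism `⟨u⟩ ≃ ⟨uᵏ⟩` sending `u` to `uᵏ`, the subgroup generated
by `u` and the stable letter `t` is isomorphic to the Baumslag–Solitar group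
`B(1,k) = ⟨a, t | tat⁻¹ = aᵏ⟩`. -/
theorem subgroup_isBaumslagSolitar_of_HNN
    (H : Type) [Group H] [IsFreeGroup H]
    (u : H) (hu : u ≠ 1) (hup : ¬ IsProperPower u)
    (k : ℤ) (hk : k ≠ 0)
    (φ : (Subgroup.zpowers u) ≃* (Subgroup.zpowers (u ^ k)))
    (hφ : φ ⟨u, Subgroup.mem_zpowers u⟩ = ⟨u ^ k, Subgroup.mem_zpowers (u ^ k)⟩) :
    Nonempty
      (↥(Subgroup.closure
          ({HNNExtension.of u, HNNExtension.t} :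
            Set (HNNExtension H (Subgroup.zpowers u) (Subgroup.zpowers (u ^ k)) φ))) ≃*
        BaumslagSolitar k) := by
  have huinj : Function.Injective fun n : ℤ => u ^ n :=
    injective_zpow_iff_not_isOfFinOrder.mpr
      (fun h => hu (eq_one_of_isOfFinOrder_of_isFreeGroup h))
  have h0 : (t : HNNExtension H (zpowers u) (zpowers (u ^ k)) φ) * of u * t⁻¹ = of (u ^ k) := by
    have h := equiv_eq_conj (φ := φ) ⟨u, mem_zpowers u⟩
    rw [hφ] at h
    exact h.symm
  have hconj : ∀ n : ℤ,
      (t : HNNExtension H (zpowers u) (zpowers (u ^ k)) φ) * of (u ^ n) = of (u ^ (n * k)) * t := by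
    intro n
    have h1 : (t : HNNExtension H (zpowers u) (zpowers (u ^ k)) φ) * of (u ^ n) * t⁻¹ =
        of (u ^ (n * k)) := by
      calc (t : HNNExtension H (zpowers u) (zpowers (u ^ k)) φ) * of (u ^ n) * t⁻¹
          = (t * of u * t⁻¹) ^ n := by
            rw [map_zpow]
            simpa [MulAut.conj_apply, mul_assoc] using map_zpow (MulAut.conj
              (t : HNNExtension H (zpowers u) (zpowers (u ^ k)) φ)) (of u) n
        _ = (of (u ^ k) : HNNExtension H (zpowers u) (zpowers (u ^ k)) φ) ^ n := by rw [h0]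
        _ = of (u ^ (n * k)) := by rw [← map_zpow, ← zpow_mul, mul_comm]
    rw [← h1]
    group
  have hrange := theta_range u k φ hk hconj
  exact ⟨((MulEquiv.subgroupCongr hrange).symm.trans
      (MonoidHom.ofInjective (theta_injective u k φ hk hconj huinj)).symm).trans (iso1 k hk)⟩
end
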